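/- arXiv:2402.14125 — 3 statements merged into one kernel-verified Lean document; each statement's English description precedes it below -/
import Mathlib

section
/- Let 0 < α < 1 and γ > 0, and set k(t) = g_{1−α}(t) e^{−γ t} and l(t) = g_α(t) e^{−γ t} + γ ∫_0^t g_α(τ) e^{−γ τ} dτ for t > 0. Then (k ∗ l)(t) = 1 for all t > 0; that is, the tempered kernels (k,l) form a Sonine pair. -/
open MeasureTheory Set

/-- Laplace convolution on `(0, ∞)`: `(f ∗ g)(t) = ∫_0^t f(t−τ) g(τ) dτ`. -/
noncomputable def lconv (f g : ℝ → ℝ) (t : ℝ) : ℝ := ∫ τ in (0:ℝ)..t, f (t - τ) * g τ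

/-- `g μ t = t^(μ-1)/Γ(μ)`. -/
noncomputable def g (μ t : ℝ) : ℝ := t ^ (μ - 1) / Real.Gamma μ

/-!
Write `h = g_α e^{-γ·}`, so that `l = h + γ (1 ∗ h)`. The weight `e^{-γ·}` factors out of a
convolution, so `k ∗ h = e^{-γt} (g_{1-α} ∗ g_α) = e^{-γt} g_1 = e^{-γt}` by the Beta integral.
Convolution commutes with integration (Fubini on the triangle `0 ≤ s ≤ u ≤ t`), hence
`k ∗ (1 ∗ h) = 1 ∗ (k ∗ h) = (1 - e^{-γt}) / γ`, and `k ∗ l = e^{-γt} + (1 - e^{-γt}) = 1`.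
-/

def triangle (t : ℝ) : Set (ℝ × ℝ) := {p | 0 ≤ p.2 ∧ p.2 ≤ p.1 ∧ p.1 ≤ t}

lemma measurableSet_triangle (t : ℝ) : MeasurableSet (triangle t) :=
  (measurableSet_le measurable_const measurable_snd).inter
    ((measurableSet_le measurable_snd measurable_fst).inter
      (measurableSet_le measurable_fst measurable_const))

lemma integral_integral_triangle_swap {E : Type*} [NormedAddCommGroup E] [NormedSpace ℝ E]
    {F : ℝ → ℝ → E} {t : ℝ} (ht : 0 ≤ t) (hF : IntegrableOn (Function.uncurry F) (triangle t)) :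
    ∫ x in 0..t, ∫ y in 0..x, F x y = ∫ y in 0..t, ∫ x in y..t, F x y := by
  set G := (triangle t).indicator (Function.uncurry F)
  have hG : IntegrableOn G (uIoc 0 t ×ˢ uIoc 0 t) :=
    (hF.integrable_indicator (measurableSet_triangle t)).integrableOn
  have inner_left : ∀ x ∈ uIcc 0 t, ∫ y in 0..x, F x y = ∫ y in 0..t, G (x, y) := by
    intro x hx
    rw [uIcc_of_le ht] at hx
    rw [← intervalIntegral.integral_indicator hx]
    refine intervalIntegral.integral_congr fun y hy => ?_
    rw [uIcc_of_le ht] at hy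
    by_cases hyx : y ≤ x <;> simp [G, triangle, indicator, hyx, hy.1, hx.2]
  have inner_right : ∀ y ∈ uIcc 0 t, ∫ x in y..t, F x y = ∫ x in 0..t, G (x, y) := by
    intro y hy
    rw [uIcc_of_le ht] at hy
    calc ∫ x in y..t, F x y = ∫ x in 0..t, (Ioi y).indicator (fun x => F x y) x := by
          rw [intervalIntegral.integral_of_le ht, intervalIntegral.integral_of_le hy.2,
            integral_indicator measurableSet_Ioi, Measure.restrict_restrict measurableSet_Ioi,
            inter_comm, Ioc_inter_Ioi, max_eq_right hy.1]
      _ = ∫ x in 0..t, G (x, y) := by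
          refine intervalIntegral.integral_congr_ae ?_
          filter_upwards [Measure.ae_ne volume y] with x hxy hx
          rw [uIoc_of_le ht] at hx
          by_cases hyx : y < x
          · simp [G, triangle, indicator, hyx, hyx.le, hy.1, hx.2]
          · simp [G, triangle, indicator, hyx, lt_of_le_of_ne (not_lt.1 hyx) hxy]
  rw [intervalIntegral.integral_congr inner_left, intervalIntegral.integral_congr inner_right]
  exact intervalIntegral_intervalIntegral_swap (F := fun x y => G (x, y)) hG

lemma IntervalIntegrable.comp_sub_self {f : ℝ → ℝ} {t : ℝ}
    (hf : IntervalIntegrable f volume 0 t) :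
    IntervalIntegrable (fun x => f (t - x)) volume 0 t := by
  simpa using (hf.comp_sub_left t).symm

lemma lconv_primitive {f h : ℝ → ℝ} {t : ℝ} (ht : 0 ≤ t) (hf : IntervalIntegrable f volume 0 t)
    (hh : IntervalIntegrable h volume 0 t) :
    lconv f (fun x => ∫ y in 0..x, h y) t = ∫ y in 0..t, (∫ v in 0..t - y, f v) * h y := by
  have hf' : IntegrableOn (fun x => f (t - x)) (Icc 0 t) := by
    rw [← intervalIntegrable_iff_integrableOn_Icc_of_le ht]
    exact hf.comp_sub_self
  have hh' : IntegrableOn h (Icc 0 t) := (intervalIntegrable_iff_integrableOn_Icc_of_le ht).1 hh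
  have hint : IntegrableOn (Function.uncurry fun x y => f (t - x) * h y) (triangle t) := by
    have := hf'.mul_prod hh'
    rw [Measure.prod_restrict, ← Measure.volume_eq_prod] at this
    exact IntegrableOn.mono_set this fun p hp =>
      ⟨⟨hp.1.trans hp.2.1, hp.2.2⟩, hp.1, hp.2.1.trans hp.2.2⟩
  calc lconv f (fun x => ∫ y in 0..x, h y) t
      = ∫ x in 0..t, ∫ y in 0..x, f (t - x) * h y := by
        simp only [lconv, intervalIntegral.integral_const_mul]
    _ = ∫ y in 0..t, ∫ x in y..t, f (t - x) * h y := integral_integral_triangle_swap ht hint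
    _ = ∫ y in 0..t, (∫ v in 0..t - y, f v) * h y := by
        simp only [intervalIntegral.integral_mul_const, intervalIntegral.integral_comp_sub_left f t,
          sub_self]

lemma integral_lconv {f h : ℝ → ℝ} {t : ℝ} (ht : 0 ≤ t) (hf : IntervalIntegrable f volume 0 t)
    (hh : IntervalIntegrable h volume 0 t) :
    ∫ x in 0..t, lconv f h x = ∫ y in 0..t, (∫ v in 0..t - y, f v) * h y := by
  have hf' : Integrable ((Icc 0 t).indicator f) :=
    ((intervalIntegrable_iff_integrableOn_Icc_of_le ht).1 hf).integrable_indicator measurableSet_Icc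
  have hh' : Integrable ((Icc 0 t).indicator h) :=
    ((intervalIntegrable_iff_integrableOn_Icc_of_le ht).1 hh).integrable_indicator measurableSet_Icc
  have hint : IntegrableOn (Function.uncurry fun x y => f (x - y) * h y) (triangle t) := by
    have := (hh'.convolution_integrand (ContinuousLinearMap.mul ℝ ℝ) hf').integrableOn
      (s := triangle t)
    rw [← Measure.volume_eq_prod] at this
    refine this.congr_fun (fun p hp => ?_) (measurableSet_triangle t)
    have hy : p.2 ∈ Icc 0 t := ⟨hp.1, hp.2.1.trans hp.2.2⟩
    have hxy : p.1 - p.2 ∈ Icc 0 t := ⟨sub_nonneg.2 hp.2.1, by linarith [hp.1, hp.2.2]⟩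
    simp [indicator_of_mem hy, indicator_of_mem hxy, Function.uncurry, mul_comm]
  calc ∫ x in 0..t, lconv f h x = ∫ x in 0..t, ∫ y in 0..x, f (x - y) * h y := rfl
    _ = ∫ y in 0..t, ∫ x in y..t, f (x - y) * h y := integral_integral_triangle_swap ht hint
    _ = ∫ y in 0..t, (∫ v in 0..t - y, f v) * h y := by
        simp only [intervalIntegral.integral_mul_const, intervalIntegral.integral_comp_sub_right f,
          sub_self]

lemma integral_rpow_mul_sub_rpow {a b u : ℝ} (ha : 0 < a) (hb : 0 < b) (hu : 0 < u) :
    ∫ x in 0..u, x ^ (a - 1) * (u - x) ^ (b - 1)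
      = u ^ (a + b - 1) * (Real.Gamma a * Real.Gamma b / Real.Gamma (a + b)) := by
  have hΓ : Complex.Gamma (a + b) ≠ 0 := by
    rw [← Complex.ofReal_add, Complex.Gamma_ofReal]
    exact Complex.ofReal_ne_zero.2 (Real.Gamma_pos_of_pos (add_pos ha hb)).ne'
  have hbeta : Complex.betaIntegral a b
      = Complex.Gamma a * Complex.Gamma b / Complex.Gamma (a + b) := by
    rw [Complex.Gamma_mul_Gamma_eq_betaIntegral (by simpa) (by simpa), mul_div_cancel_left₀ _ hΓ]
  apply Complex.ofReal_injective
  rw [← intervalIntegral.integral_ofReal]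
  convert Complex.betaIntegral_scaled a b hu using 1
  · refine intervalIntegral.integral_congr fun x hx => ?_
    rw [uIcc_of_le hu.le] at hx
    rw [Complex.ofReal_mul, Complex.ofReal_cpow hx.1, Complex.ofReal_cpow (sub_nonneg.2 hx.2)]
    push_cast
    rfl
  · rw [hbeta, Complex.ofReal_mul, Complex.ofReal_cpow hu.le, ← Complex.ofReal_add,
      Complex.Gamma_ofReal, Complex.Gamma_ofReal, Complex.Gamma_ofReal]
    push_cast
    rfl

lemma lconv_g_g {a b u : ℝ} (ha : 0 < a) (hb : 0 < b) (hu : 0 < u) :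
    lconv (g a) (g b) u = g (a + b) u := by
  have hΓa := (Real.Gamma_pos_of_pos ha).ne'
  have hΓb := (Real.Gamma_pos_of_pos hb).ne'
  calc lconv (g a) (g b) u
      = (∫ x in 0..u, x ^ (b - 1) * (u - x) ^ (a - 1)) / (Real.Gamma a * Real.Gamma b) := by
        rw [lconv, ← intervalIntegral.integral_div]
        refine intervalIntegral.integral_congr fun x _ => ?_
        simp only [g]
        ring
    _ = g (a + b) u := by
        rw [integral_rpow_mul_sub_rpow hb ha hu, g, add_comm b a]
        field_simp

lemma lconv_mul_exp (f₁ f₂ : ℝ → ℝ) (γ u : ℝ) :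
    lconv (fun t => f₁ t * Real.exp (-(γ * t))) (fun t => f₂ t * Real.exp (-(γ * t))) u
      = Real.exp (-(γ * u)) * lconv f₁ f₂ u := by
  rw [lconv, lconv, ← intervalIntegral.integral_const_mul]
  refine intervalIntegral.integral_congr fun τ _ => ?_
  have : Real.exp (-(γ * (u - τ))) * Real.exp (-(γ * τ)) = Real.exp (-(γ * u)) := by
    rw [← Real.exp_add]
    ring_nf
  linear_combination f₁ (u - τ) * f₂ τ * this

lemma intervalIntegrable_g {μ : ℝ} (hμ : 0 < μ) (a b : ℝ) : IntervalIntegrable (g μ) volume a b :=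
  (intervalIntegral.intervalIntegrable_rpow' (by linarith)).div_const _

lemma lconv_add_mul {f h₁ h₂ : ℝ → ℝ} (c t : ℝ)
    (h₁i : IntervalIntegrable (fun τ => f (t - τ) * h₁ τ) volume 0 t)
    (h₂i : IntervalIntegrable (fun τ => f (t - τ) * h₂ τ) volume 0 t) :
    lconv f (fun τ => h₁ τ + c * h₂ τ) t = lconv f h₁ t + c * lconv f h₂ t := by
  rw [lconv, lconv, lconv, ← intervalIntegral.integral_const_mul,
    ← intervalIntegral.integral_add h₁i (h₂i.const_mul c)]
  congr 1 with τ
  ring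

lemma integral_exp_neg_mul {γ : ℝ} (hγ : γ ≠ 0) (t : ℝ) :
    ∫ x in (0:ℝ)..t, Real.exp (-(γ * x)) = (1 - Real.exp (-(γ * t))) / γ := by
  rw [intervalIntegral.integral_comp_mul_left (fun x => Real.exp (-x)) hγ,
    intervalIntegral.integral_comp_neg, integral_exp]
  simp only [mul_zero, neg_zero, Real.exp_zero, smul_eq_mul]
  field_simp

theorem stmt_8 (α γ : ℝ) (hα : 0 < α) (hα1 : α < 1) (hγ : 0 < γ)
    (k l : ℝ → ℝ)
    (hk : ∀ t : ℝ, k t = g (1 - α) t * Real.exp (-(γ * t)))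
    (hl : ∀ t : ℝ, l t = g α t * Real.exp (-(γ * t))
        + γ * ∫ τ in (0:ℝ)..t, g α τ * Real.exp (-(γ * τ))) :
    ∀ t ∈ Ioi (0:ℝ), lconv k l t = 1 := by
  intro t ht
  set h := fun τ => g α τ * Real.exp (-(γ * τ))
  have sonine : ∀ u > 0, lconv k h u = Real.exp (-(γ * u)) := by
    intro u hu
    rw [show k = _ from funext hk, lconv_mul_exp, lconv_g_g (by linarith) hα hu, sub_add_cancel, g]
    simp
  have hki : IntervalIntegrable k volume 0 t := by
    rw [show k = _ from funext hk]
    exact (intervalIntegrable_g (by linarith) 0 t).mul_continuousOn (by fun_prop)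
  have hhi : IntervalIntegrable h volume 0 t :=
    (intervalIntegrable_g hα 0 t).mul_continuousOn (by fun_prop)
  have hkh : IntervalIntegrable (fun τ => k (t - τ) * h τ) volume 0 t :=
    intervalIntegral.intervalIntegrable_of_integral_ne_zero <| by
      rw [← lconv, sonine t ht]
      positivity
  have hkH : IntervalIntegrable (fun τ => k (t - τ) * ∫ y in 0..τ, h y) volume 0 t :=
    hki.comp_sub_self.mul_continuousOn
      (intervalIntegral.continuousOn_primitive_interval' hhi left_mem_uIcc)
  calc lconv k l t
      = lconv k h t + γ * lconv k (fun τ => ∫ y in 0..τ, h y) t := by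
        rw [show l = fun τ => h τ + γ * ∫ y in 0..τ, h y from funext hl]
        exact lconv_add_mul γ t hkh hkH
    _ = Real.exp (-(γ * t)) + γ * ∫ u in 0..t, Real.exp (-(γ * u)) := by
        rw [sonine t ht, lconv_primitive ht.le hki hhi, ← integral_lconv ht.le hki hhi]
        congr 2
        refine intervalIntegral.integral_congr_ae (ae_of_all _ fun u hu => sonine u ?_)
        rw [uIoc_of_le ht.le] at hu
        exact hu.1
    _ = 1 := by
        rw [integral_exp_neg_mul hγ.ne']
        field_simp
        ring
end

section
/- Let m ≥ 2 and 0 < α_m < ⋯ < α_2 < α_1 < 1. Set k(t) = ∑_{j=1}^m g_{1−α_j}(t) and l(t) = t^{α_1−1} E_{(α_1−α_2,…,α_1−α_m),α_1}(−t^{α_1−α_2},…,−t^{α_1−α_m}) for t > 0. Then (k ∗ l)(t) = 1 for all t > 0; that is, (k,l) form a Sonine pair associated with the multi-term time-fractional diffusion equation. -/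
open MeasureTheory Set

/-- The multivariate Mittag-Leffler function
`E_{(a_1,…,a_n),β}(z_1,…,z_n) = ∑_{k=0}^∞ ∑_{l_1+⋯+l_n=k} (k!/(l_1!⋯l_n!)) ∏ z_j^{l_j} / Γ(β + ∑ a_j l_j)`. -/
noncomputable def mvMittagLeffler (n : ℕ) (a : Fin n → ℝ) (β : ℝ) (z : Fin n → ℝ) : ℝ :=
  ∑' k : ℕ, ∑ l ∈ Finset.Nat.antidiagonalTuple n k,
    ((Nat.factorial k : ℝ) / ∏ j, (Nat.factorial (l j) : ℝ)) *
      (∏ j, z j ^ l j) / Real.Gamma (β + ∑ j, a j * l j)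

/-! Write `β = α₁` and `δᵢ = α₁ - αᵢ₊₁ > 0`, so that `k = g_{1-β} + ∑ᵢ g_{1-β+δᵢ}`. Expanding the
Mittag-Leffler function, `l = ∑ₖ (-1)ᵏ Sₖ(β)` with `Sₖ(c) = ∑_{|v| = k} (k; v) g_{c + δ·v}`.
The Beta integral gives `g_p ∗ g_q = g_{p+q}`, hence `k ∗ Sₖ(β) = Sₖ(1) + ∑ᵢ Sₖ(1 + δᵢ)`, and
Pascal's rule for multinomial coefficients turns the last sum into `Sₖ₊₁(1)`. The alternating
series `∑ₖ (-1)ᵏ (Sₖ(1) + Sₖ₊₁(1))` telescopes to `S₀(1) = g₁ = 1`. Termwise integration is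
legitimate because all `Sₖ` are nonnegative and `∑ₖ Sₖ(1)(t) < ∞`, which follows from
`Γ(1 + s) ≥ yˢ e⁻ʸ` and the multinomial theorem. -/

open Finset Function Filter Topology
open scoped Nat

open Real in
theorem Real.rpow_mul_exp_neg_le_Gamma_add_one {s y : ℝ} (hs : 0 ≤ s) (hy : 0 ≤ y) :
    y ^ s * exp (-y) ≤ Gamma (s + 1) := by
  have hint : IntegrableOn (fun x => exp (-x) * x ^ s) (Ioi 0) := by
    simpa using GammaIntegral_convergent (s := s + 1) (by linarith)
  rw [Gamma_eq_integral (by linarith), add_sub_cancel_right]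
  calc y ^ s * exp (-y) = ∫ x in Ioi y, y ^ s * exp (-x) := by
        rw [integral_const_mul, integral_exp_neg_Ioi]
    _ ≤ ∫ x in Ioi y, exp (-x) * x ^ s := by
        refine setIntegral_mono_on ((integrableOn_exp_neg_Ioi y).const_mul _)
          (hint.mono_set (Ioi_subset_Ioi hy)) measurableSet_Ioi fun x hx => ?_
        rw [mul_comm]
        gcongr
        exact le_of_lt hx
    _ ≤ ∫ x in Ioi 0, exp (-x) * x ^ s :=
        setIntegral_mono_set hint
          (ae_restrict_of_forall_mem measurableSet_Ioi fun x hx =>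
            mul_nonneg (exp_pos _).le (rpow_nonneg (le_of_lt hx) _))
          (Ioi_subset_Ioi hy).eventuallyLE

theorem g_one_add_le_exp_mul_div_rpow {s t y : ℝ} (hs : 0 ≤ s) (ht : 0 ≤ t) (hy : 0 < y) :
    g (1 + s) t ≤ Real.exp y * (t / y) ^ s := by
  have hΓ := Real.rpow_mul_exp_neg_le_Gamma_add_one hs hy.le
  have hys : 0 < y ^ s * Real.exp (-y) := by positivity
  rw [g, add_sub_cancel_left, add_comm, Real.div_rpow ht hy.le, div_le_iff₀ (hys.trans_le hΓ)]
  calc t ^ s = Real.exp y * (t ^ s / y ^ s) * (y ^ s * Real.exp (-y)) := by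
        rw [Real.exp_neg]; field_simp
    _ ≤ Real.exp y * (t ^ s / y ^ s) * Real.Gamma (s + 1) := by gcongr

theorem integral_sub_rpow_mul_rpow {p q t : ℝ} (hp : 0 < p) (hq : 0 < q) (ht : 0 < t) :
    ∫ τ in (0:ℝ)..t, (t - τ) ^ (p - 1) * τ ^ (q - 1)
      = Real.Gamma p * Real.Gamma q / Real.Gamma (p + q) * t ^ (p + q - 1) := by
  apply Complex.ofReal_injective
  have hbeta := Complex.betaIntegral_scaled q p ht
  rw [Complex.betaIntegral_eq_Gamma_mul_div _ _ (by simpa) (by simpa)] at hbeta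
  rw [← intervalIntegral.integral_ofReal, intervalIntegral.integral_congr
    (g := fun τ : ℝ => (τ : ℂ) ^ ((q : ℂ) - 1) * ((t : ℂ) - τ) ^ ((p : ℂ) - 1)), hbeta]
  · push_cast
    rw [Complex.ofReal_cpow ht.le, ← Complex.ofReal_add, Complex.Gamma_ofReal,
      Complex.Gamma_ofReal, Complex.Gamma_ofReal]
    push_cast
    ring_nf
  · intro τ hτ
    rw [uIcc_of_le ht.le] at hτ
    simp only
    rw [Complex.ofReal_mul, Complex.ofReal_cpow (by linarith [hτ.2]), Complex.ofReal_cpow hτ.1]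
    push_cast
    ring

theorem g_pos {μ t : ℝ} (hμ : 0 < μ) (ht : 0 < t) : 0 < g μ t :=
  div_pos (Real.rpow_pos_of_pos ht _) (Real.Gamma_pos_of_pos hμ)

theorem g_nonneg {μ t : ℝ} (hμ : 0 < μ) (ht : 0 ≤ t) : 0 ≤ g μ t :=
  div_nonneg (Real.rpow_nonneg ht _) (Real.Gamma_pos_of_pos hμ).le

theorem lconv_g_g_s14 {p q t : ℝ} (hp : 0 < p) (hq : 0 < q) (ht : 0 < t) :
    lconv (g p) (g q) t = g (p + q) t := by
  have hΓp := (Real.Gamma_pos_of_pos hp).ne'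
  have hΓq := (Real.Gamma_pos_of_pos hq).ne'
  have hΓpq := (Real.Gamma_pos_of_pos (add_pos hp hq)).ne'
  simp only [lconv, g, div_mul_div_comm]
  rw [intervalIntegral.integral_div, integral_sub_rpow_mul_rpow hp hq ht]
  field_simp

theorem intervalIntegrable_g_mul_g {p q t : ℝ} (hp : 0 < p) (hq : 0 < q) (ht : 0 < t) :
    IntervalIntegrable (fun τ => g p (t - τ) * g q τ) volume 0 t :=
  intervalIntegral.intervalIntegrable_of_integral_ne_zero <| by
    rw [← lconv, lconv_g_g_s14 hp hq ht]
    exact (g_pos (add_pos hp hq) ht).ne'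

section lconv

variable {K f : ℝ → ℝ} {t : ℝ}

theorem lconv_const_mul_right (a : ℝ) : lconv K (fun τ => a * f τ) t = a * lconv K f t := by
  simp only [lconv, mul_left_comm _ a, intervalIntegral.integral_const_mul]

theorem lconv_add_left {K₁ K₂ : ℝ → ℝ}
    (h₁ : IntervalIntegrable (fun τ => K₁ (t - τ) * f τ) volume 0 t)
    (h₂ : IntervalIntegrable (fun τ => K₂ (t - τ) * f τ) volume 0 t) :
    lconv (fun τ => K₁ τ + K₂ τ) f t = lconv K₁ f t + lconv K₂ f t := by
  simp only [lconv, add_mul]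
  exact intervalIntegral.integral_add h₁ h₂

theorem lconv_sum_left {ι : Type*} (s : Finset ι) {K : ι → ℝ → ℝ}
    (h : ∀ i ∈ s, IntervalIntegrable (fun τ => K i (t - τ) * f τ) volume 0 t) :
    lconv (fun τ => ∑ i ∈ s, K i τ) f t = ∑ i ∈ s, lconv (K i) f t := by
  simp only [lconv, sum_mul]
  exact intervalIntegral.integral_finsetSum h

theorem IntervalIntegrable.sum_left {ι : Type*} (s : Finset ι) {K : ι → ℝ → ℝ}
    (h : ∀ i ∈ s, IntervalIntegrable (fun τ => K i (t - τ) * f τ) volume 0 t) :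
    IntervalIntegrable (fun τ => (∑ i ∈ s, K i (t - τ)) * f τ) volume 0 t := by
  have := IntervalIntegrable.sum s h
  rw [Finset.sum_fn] at this
  simpa only [sum_mul] using this

theorem lconv_tsum {l : ℝ → ℝ} {F : ℕ → ℝ → ℝ} (ht : 0 ≤ t)
    (hl : ∀ τ ∈ Ioc 0 t, l τ = ∑' k, F k τ)
    (hint : ∀ k, IntervalIntegrable (fun τ => K (t - τ) * F k τ) volume 0 t)
    (hsum : Summable fun k => ∫ τ in Ioc 0 t, ‖K (t - τ) * F k τ‖) :
    lconv K l t = ∑' k, lconv K (F k) t := by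
  simp only [lconv, intervalIntegral.integral_of_le ht]
  rw [integral_tsum_of_summable_integral_norm (fun k => (hint k).1) hsum]
  refine setIntegral_congr_fun measurableSet_Ioc fun τ hτ => ?_
  rw [hl τ hτ, tsum_mul_left]

end lconv

theorem tsum_neg_one_pow_mul_add_succ {S : ℕ → ℝ} (hS : Summable S) :
    ∑' k, (-1) ^ k * (S k + S (k + 1)) = S 0 := by
  have halt : ∀ {f : ℕ → ℝ}, Summable f → Summable fun k => (-1) ^ k * f k := fun hf =>
    hf.abs.of_norm_bounded fun k => by simp
  have h₀ := halt hS
  have h₁ := halt ((summable_nat_add_iff 1).2 hS)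
  simp only [mul_add]
  rw [h₀.tsum_add h₁, h₀.tsum_eq_zero_add]
  simp [pow_succ, tsum_neg]

theorem Finset.sum_update_add {α M : Type*} [Fintype α] [DecidableEq α] [AddCommMonoid M]
    (f : α → M) (a : α) (b : M) : ∑ i, update f a (f a + b) i = ∑ i, f i + b := by
  rw [sum_update_of_mem (mem_univ a), ← add_sum_erase _ _ (mem_univ a), erase_eq, add_right_comm]

theorem Nat.cast_factorial_sum_div_prod_eq_multinomial {α : Type*} (s : Finset α) (f : α → ℕ) :
    ((∑ i ∈ s, f i)! : ℝ) / ∏ i ∈ s, ((f i)! : ℝ) = Nat.multinomial s f := by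
  rw [← Nat.multinomial_spec, Nat.cast_mul, Nat.cast_prod,
    mul_div_cancel_left₀ _ (prod_ne_zero_iff.mpr fun i _ => by positivity)]

theorem Nat.succ_mul_multinomial_update {α : Type*} [Fintype α] [DecidableEq α] (f : α → ℕ)
    (a : α) : (f a + 1) * Nat.multinomial univ (update f a (f a + 1))
      = (∑ i, f i + 1) * Nat.multinomial univ f := by
  have hprod : ∏ i, (update f a (f a + 1) i)! = (f a + 1) * ∏ i, (f i)! := by
    change ∏ i, (factorial ∘ update f a (f a + 1)) i = _
    rw [comp_update, prod_update_of_mem (mem_univ a), ← mul_prod_erase _ _ (mem_univ a),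
      erase_eq, Nat.factorial_succ, mul_assoc]
    rfl
  have hspec := Nat.multinomial_spec univ (update f a (f a + 1))
  rw [sum_update_add, hprod, Nat.factorial_succ, ← Nat.multinomial_spec univ f] at hspec
  refine Nat.eq_of_mul_eq_mul_left (prod_pos fun i _ => (f i).factorial_pos : 0 < ∏ i, (f i)!) ?_
  linarith

theorem sum_sum_antidiagonalTuple_update {n : ℕ} (k : ℕ) (F : (Fin n → ℕ) → ℝ) :
    ∑ j, ∑ v ∈ Nat.antidiagonalTuple n k, (Nat.multinomial univ v : ℝ) * F (update v j (v j + 1))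
      = ∑ v ∈ Nat.antidiagonalTuple n (k + 1), (Nat.multinomial univ v : ℝ) * F v := by
  have hk : (k + 1 : ℝ) ≠ 0 := by positivity
  have hsplit : ∑ v ∈ Nat.antidiagonalTuple n (k + 1), (Nat.multinomial univ v : ℝ) * F v
      = ∑ j, ∑ v ∈ Nat.antidiagonalTuple n (k + 1),
          (v j : ℝ) / (k + 1) * ((Nat.multinomial univ v : ℝ) * F v) := by
    rw [sum_comm]
    refine sum_congr rfl fun v hv => ?_
    rw [← sum_mul, ← sum_div, ← Nat.cast_sum, (Nat.mem_antidiagonalTuple.mp hv)]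
    push_cast
    rw [div_self hk, one_mul]
  rw [hsplit]
  refine sum_congr rfl fun j _ => sum_of_injOn (fun v => update v j (v j + 1)) ?_ ?_ ?_ ?_
  · intro v _ w _ h
    funext i
    have := congrFun h i
    rcases eq_or_ne i j with rfl | hij
    · simpa using this
    · simpa [hij] using this
  · intro v hv
    rw [mem_coe, Nat.mem_antidiagonalTuple] at hv ⊢
    rw [sum_update_add, hv]
  · intro w hw hw_im
    suffices hj : w j = 0 by simp [hj]
    by_contra hj
    have hw_eq : update (update w j (w j - 1)) j (update w j (w j - 1) j + 1) = w := by
      simp only [update_self, update_idem, Nat.sub_add_cancel (Nat.pos_of_ne_zero hj),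
        update_eq_self]
    refine hw_im ⟨update w j (w j - 1), ?_, hw_eq⟩
    rw [mem_coe, Nat.mem_antidiagonalTuple]
    rw [Nat.mem_antidiagonalTuple, ← hw_eq, sum_update_add] at hw
    omega
  · intro v hv
    have hmul := Nat.succ_mul_multinomial_update v j
    rw [Nat.mem_antidiagonalTuple.mp hv] at hmul
    have hmul' : ((v j : ℝ) + 1) * (Nat.multinomial univ (update v j (v j + 1)) : ℝ)
        = ((k : ℝ) + 1) * Nat.multinomial univ v := by exact_mod_cast hmul
    simp only [update_self]
    push_cast
    field_simp
    linear_combination (F (update v j (v j + 1))) * hmul'.symm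

theorem Real.prod_rpow_pow {ι : Type*} (s : Finset ι) {x : ℝ} (hx : 0 < x) (a : ι → ℝ)
    (v : ι → ℕ) : ∏ i ∈ s, (x ^ a i) ^ v i = x ^ ∑ i ∈ s, a i * v i := by
  rw [Real.rpow_sum_of_pos hx]
  refine prod_congr rfl fun i _ => ?_
  rw [Real.rpow_mul hx.le, Real.rpow_natCast]

theorem sum_antidiagonalTuple_multinomial_mul_prod_pow {n : ℕ} (x : Fin n → ℝ) (k : ℕ) :
    ∑ v ∈ Nat.antidiagonalTuple n k, (Nat.multinomial univ v : ℝ) * ∏ j, x j ^ v j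
      = (∑ j, x j) ^ k := by
  rw [sum_pow_eq_sum_piAntidiag, piAntidiag_univ_fin_eq_antidiagonalTuple]

noncomputable def mvMittagLefflerTerm {n : ℕ} (δ : Fin n → ℝ) (c : ℝ) (k : ℕ) (t : ℝ) : ℝ :=
  ∑ v ∈ Nat.antidiagonalTuple n k, (Nat.multinomial univ v : ℝ) * g (c + ∑ j, δ j * v j) t

section mvMittagLefflerTerm

variable {n : ℕ} {δ : Fin n → ℝ} {c t : ℝ}

theorem sum_mul_natCast_nonneg (hδ : ∀ j, 0 ≤ δ j) (v : Fin n → ℕ) : 0 ≤ ∑ j, δ j * v j :=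
  sum_nonneg fun j _ => mul_nonneg (hδ j) (Nat.cast_nonneg _)

theorem rpow_mul_mvMittagLeffler_neg_rpow (ht : 0 < t) :
    t ^ (c - 1) * mvMittagLeffler n δ c (fun j => -(t ^ δ j))
      = ∑' k, (-1) ^ k * mvMittagLefflerTerm δ c k t := by
  rw [mvMittagLeffler, ← tsum_mul_left]
  refine tsum_congr fun k => ?_
  rw [mvMittagLefflerTerm, mul_sum, mul_sum]
  refine sum_congr rfl fun v hv => ?_
  rw [Nat.mem_antidiagonalTuple] at hv
  have hsign : ∏ j, (-(t ^ δ j)) ^ v j = (-1) ^ k * t ^ ∑ j, δ j * v j := by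
    rw [prod_congr rfl fun j _ => neg_pow (t ^ δ j) (v j), prod_mul_distrib,
      prod_pow_eq_pow_sum, hv, Real.prod_rpow_pow _ ht]
  rw [hsign, ← hv, Nat.cast_factorial_sum_div_prod_eq_multinomial, hv, g,
    show c + ∑ j, δ j * v j - 1 = (c - 1) + ∑ j, δ j * v j by ring, Real.rpow_add ht]
  ring

theorem mvMittagLefflerTerm_nonneg (hδ : ∀ j, 0 ≤ δ j) (hc : 0 < c) (ht : 0 ≤ t) (k : ℕ) :
    0 ≤ mvMittagLefflerTerm δ c k t :=
  sum_nonneg fun v _ => mul_nonneg (Nat.cast_nonneg _) <|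
    g_nonneg (add_pos_of_pos_of_nonneg hc (sum_mul_natCast_nonneg hδ v)) ht

theorem mvMittagLefflerTerm_zero : mvMittagLefflerTerm δ c 0 t = g c t := by
  simp [mvMittagLefflerTerm, Finset.Nat.antidiagonalTuple_zero_right, Nat.multinomial]

theorem sum_mvMittagLefflerTerm_add (k : ℕ) :
    ∑ j, mvMittagLefflerTerm δ (c + δ j) k t = mvMittagLefflerTerm δ c (k + 1) t := by
  rw [mvMittagLefflerTerm, ← sum_sum_antidiagonalTuple_update]
  refine sum_congr rfl fun j _ => sum_congr rfl fun v _ => ?_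
  have hupd : ∀ i, δ i * (update v j (v j + 1) i : ℝ) = δ i * v i + if i = j then δ j else 0 := by
    intro i
    by_cases h : i = j
    · subst h; simp [mul_add]
    · simp [h]
  simp only [hupd, sum_add_distrib, sum_ite_eq', Finset.mem_univ, ite_true]
  ring_nf

theorem mvMittagLefflerTerm_one_le (hδ : ∀ j, 0 ≤ δ j) (ht : 0 < t) {y : ℝ} (hy : 0 < y)
    (k : ℕ) : mvMittagLefflerTerm δ 1 k t ≤ Real.exp y * (∑ j, (t / y) ^ δ j) ^ k := by
  rw [← sum_antidiagonalTuple_multinomial_mul_prod_pow, mul_sum, mvMittagLefflerTerm]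
  refine sum_le_sum fun v _ => ?_
  rw [Real.prod_rpow_pow _ (div_pos ht hy), mul_left_comm]
  gcongr
  exact g_one_add_le_exp_mul_div_rpow (sum_mul_natCast_nonneg hδ v) ht.le hy

theorem summable_mvMittagLefflerTerm_one (hδ : ∀ j, 0 < δ j) (ht : 0 < t) :
    Summable fun k => mvMittagLefflerTerm δ 1 k t := by
  have hlim : Tendsto (fun y => ∑ j, (t / y) ^ δ j) atTop (𝓝 0) := by
    rw [← sum_const_zero (s := (univ : Finset (Fin n)))]
    refine tendsto_finsetSum _ fun j _ => ?_
    rw [← Real.zero_rpow (hδ j).ne']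
    exact (Real.continuousAt_rpow_const 0 (δ j) (Or.inr (hδ j).le)).tendsto.comp
      (tendsto_const_nhds.div_atTop tendsto_id)
  obtain ⟨y, hρ, hy⟩ := ((hlim.eventually (gt_mem_nhds one_pos)).and (eventually_gt_atTop 0)).exists
  have hρ0 : 0 ≤ ∑ j, (t / y) ^ δ j := sum_nonneg fun j _ => by positivity
  exact Summable.of_nonneg_of_le (mvMittagLefflerTerm_nonneg (fun j => (hδ j).le) one_pos ht.le)
    (mvMittagLefflerTerm_one_le (fun j => (hδ j).le) ht hy)
    ((summable_geometric_of_lt_one hρ0 hρ).mul_left _)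

theorem intervalIntegrable_g_mul_mvMittagLefflerTerm {p : ℝ} (hp : 0 < p) (hδ : ∀ j, 0 ≤ δ j)
    (hc : 0 < c) (ht : 0 < t) (k : ℕ) :
    IntervalIntegrable (fun τ => g p (t - τ) * mvMittagLefflerTerm δ c k τ) volume 0 t := by
  have h := IntervalIntegrable.sum (Nat.antidiagonalTuple n k)
    (f := fun v τ => (Nat.multinomial univ v : ℝ) * (g p (t - τ) * g (c + ∑ j, δ j * v j) τ))
    fun v _ => (intervalIntegrable_g_mul_g hp
      (add_pos_of_pos_of_nonneg hc (sum_mul_natCast_nonneg hδ v)) ht).const_mul _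
  rw [Finset.sum_fn] at h
  simpa only [mvMittagLefflerTerm, mul_sum, mul_left_comm (g p _)] using h

theorem lconv_g_mvMittagLefflerTerm {p : ℝ} (hp : 0 < p) (hδ : ∀ j, 0 ≤ δ j) (hc : 0 < c)
    (ht : 0 < t) (k : ℕ) :
    lconv (g p) (mvMittagLefflerTerm δ c k) t = mvMittagLefflerTerm δ (p + c) k t := by
  have hq : ∀ v : Fin n → ℕ, 0 < c + ∑ j, δ j * v j := fun v =>
    add_pos_of_pos_of_nonneg hc (sum_mul_natCast_nonneg hδ v)
  simp only [lconv, mvMittagLefflerTerm, mul_sum, mul_left_comm (g p _)]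
  rw [intervalIntegral.integral_finsetSum fun v _ =>
    (intervalIntegrable_g_mul_g hp (hq v) ht).const_mul _]
  refine sum_congr rfl fun v _ => ?_
  rw [intervalIntegral.integral_const_mul, ← lconv, lconv_g_g_s14 hp (hq v) ht, add_assoc]

variable {β : ℝ}

theorem intervalIntegrable_multiTerm_mul_mvMittagLefflerTerm (hδ : ∀ j, 0 ≤ δ j) (hβ0 : 0 < β)
    (hβ1 : β < 1) (ht : 0 < t) (k : ℕ) :
    IntervalIntegrable (fun τ => (g (1 - β) (t - τ) + ∑ j, g (1 - β + δ j) (t - τ)) *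
      mvMittagLefflerTerm δ β k τ) volume 0 t := by
  simp only [add_mul]
  exact (intervalIntegrable_g_mul_mvMittagLefflerTerm (sub_pos.2 hβ1) hδ hβ0 ht k).add
    (IntervalIntegrable.sum_left _ fun j _ => intervalIntegrable_g_mul_mvMittagLefflerTerm
      (add_pos_of_pos_of_nonneg (sub_pos.2 hβ1) (hδ j)) hδ hβ0 ht k)

theorem lconv_multiTerm_mvMittagLefflerTerm (hδ : ∀ j, 0 ≤ δ j) (hβ0 : 0 < β) (hβ1 : β < 1)
    (ht : 0 < t) (k : ℕ) :
    lconv (fun τ => g (1 - β) τ + ∑ j, g (1 - β + δ j) τ) (mvMittagLefflerTerm δ β k) t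
      = mvMittagLefflerTerm δ 1 k t + mvMittagLefflerTerm δ 1 (k + 1) t := by
  have hp : ∀ j, 0 < 1 - β + δ j := fun j => add_pos_of_pos_of_nonneg (sub_pos.2 hβ1) (hδ j)
  rw [lconv_add_left (intervalIntegrable_g_mul_mvMittagLefflerTerm (sub_pos.2 hβ1) hδ hβ0 ht k)
      (IntervalIntegrable.sum_left _ fun j _ =>
        intervalIntegrable_g_mul_mvMittagLefflerTerm (hp j) hδ hβ0 ht k),
    lconv_sum_left _ fun j _ => intervalIntegrable_g_mul_mvMittagLefflerTerm (hp j) hδ hβ0 ht k,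
    ← sum_mvMittagLefflerTerm_add, lconv_g_mvMittagLefflerTerm (sub_pos.2 hβ1) hδ hβ0 ht]
  simp only [lconv_g_mvMittagLefflerTerm (hp _) hδ hβ0 ht, sub_add_cancel,
    show ∀ j, 1 - β + δ j + β = 1 + δ j from fun j => by ring]

end mvMittagLefflerTerm

theorem lconv_multiTerm_rpow_mul_mvMittagLeffler {n : ℕ} {δ : Fin n → ℝ} (hδ : ∀ j, 0 < δ j)
    {β t : ℝ} (hβ0 : 0 < β) (hβ1 : β < 1) (ht : 0 < t) :
    lconv (fun τ => g (1 - β) τ + ∑ j, g (1 - β + δ j) τ)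
      (fun τ => τ ^ (β - 1) * mvMittagLeffler n δ β fun j => -(τ ^ δ j)) t = 1 := by
  have hδ' : ∀ j, 0 ≤ δ j := fun j => (hδ j).le
  have hS := summable_mvMittagLefflerTerm_one hδ ht
  rw [lconv_tsum (F := fun k τ => (-1) ^ k * mvMittagLefflerTerm δ β k τ) ht.le
    (fun τ hτ => rpow_mul_mvMittagLeffler_neg_rpow hτ.1)
    (fun k => by simpa only [mul_left_comm] using
      (intervalIntegrable_multiTerm_mul_mvMittagLefflerTerm hδ' hβ0 hβ1 ht k).const_mul ((-1) ^ k))]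
  · simp only [lconv_const_mul_right, lconv_multiTerm_mvMittagLefflerTerm hδ' hβ0 hβ1 ht]
    rw [tsum_neg_one_pow_mul_add_succ hS, mvMittagLefflerTerm_zero, g, sub_self, Real.rpow_zero,
      Real.Gamma_one, div_one]
  · refine (hS.add ((summable_nat_add_iff 1).2 hS)).congr fun k => ?_
    rw [← lconv_multiTerm_mvMittagLefflerTerm hδ' hβ0 hβ1 ht, lconv,
      intervalIntegral.integral_of_le ht.le]
    refine setIntegral_congr_fun measurableSet_Ioc fun τ hτ => ?_
    have hK : 0 ≤ g (1 - β) (t - τ) + ∑ j, g (1 - β + δ j) (t - τ) :=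
      add_nonneg (g_nonneg (sub_pos.2 hβ1) (sub_nonneg.2 hτ.2)) <| sum_nonneg fun j _ =>
        g_nonneg (add_pos_of_pos_of_nonneg (sub_pos.2 hβ1) (hδ' j)) (sub_nonneg.2 hτ.2)
    rw [norm_mul, norm_mul, norm_pow, norm_neg, norm_one, one_pow, one_mul,
      Real.norm_of_nonneg hK, Real.norm_of_nonneg (mvMittagLefflerTerm_nonneg hδ' hβ0 hτ.1.le k)]

theorem stmt_14 (m : ℕ) (hm : 2 ≤ m) (α : Fin m → ℝ)
    (hpos : ∀ j, 0 < α j) (hanti : StrictAnti α) (hα1 : α ⟨0, by omega⟩ < 1)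
    (k l : ℝ → ℝ)
    (hk : ∀ t : ℝ, k t = ∑ j, g (1 - α j) t)
    (hl : ∀ t : ℝ, l t = t ^ (α ⟨0, by omega⟩ - 1) *
      mvMittagLeffler (m - 1)
        (fun i => α ⟨0, by omega⟩ - α (Fin.cast (by omega) i.succ))
        (α ⟨0, by omega⟩)
        (fun i => -(t ^ (α ⟨0, by omega⟩ - α (Fin.cast (by omega) i.succ))))) :
    ∀ t ∈ Ioi (0:ℝ), lconv k l t = 1 := by
  intro t ht
  have hm' : m - 1 + 1 = m := by omega
  have hk' : k = fun τ => g (1 - α ⟨0, by omega⟩) τ +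
      ∑ i : Fin (m - 1),
        g (1 - α ⟨0, by omega⟩ + (α ⟨0, by omega⟩ - α (Fin.cast hm' i.succ))) τ := by
    funext τ
    rw [hk, ← (finCongr hm').sum_comp, Fin.sum_univ_succ]
    simp only [sub_add_sub_cancel]
    rfl
  rw [hk', funext hl]
  exact lconv_multiTerm_rpow_mul_mvMittagLeffler
    (fun i => sub_pos.2 (hanti (Fin.mk_lt_mk.2 (by simp)))) (hpos _) hα1 ht
end

section
/- Let (k,l) belong to the class PC and let μ > 0. Let s_μ : (0,∞) → ℝ be a nonnegative, nonincreasing, measurable, locally integrable function satisfying s_μ(t) + μ·(l ∗ s_μ)(t) = 1 for all t > 0. Then for almost every t > 0 with ∫_0^t l(τ) dτ > 0, one has μ · s_μ(t) ≤ (∫_0^t l(τ) dτ)^{−1}. -/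
open MeasureTheory Set

/-- The pair `(k, l)` belongs to the class `PC`. -/
structure SoninePC (k l : ℝ → ℝ) : Prop where
  k_nonneg : ∀ t ∈ Ioi (0:ℝ), 0 ≤ k t
  k_anti : AntitoneOn k (Ioi 0)
  k_locInt : LocallyIntegrableOn k (Ioi 0)
  l_nonneg : ∀ t ∈ Ioi (0:ℝ), 0 ≤ l t
  l_locInt : LocallyIntegrableOn l (Ioi 0)
  sonine : ∀ t ∈ Ioi (0:ℝ), lconv k l t = 1

/-!
Fix `t > 0` with `L := ∫_0^t l > 0`. Since `s` is nonincreasing and `l ≥ 0`,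
`(l ∗ s)(t) = ∫_0^t l(t−τ) s(τ) dτ ≥ s(t) ∫_0^t l(t−τ) dτ = L s(t)`,
so the Volterra equation gives `s(t) + μ L s(t) ≤ 1`, and `s(t) ≥ 0` yields `μ L s(t) ≤ 1`.
-/

section lconv

variable {f g : ℝ → ℝ} {t : ℝ}

lemma lconv_nonneg (hf : ∀ u ∈ Ioi (0:ℝ), 0 ≤ f u) (hg : ∀ u ∈ Ioi (0:ℝ), 0 ≤ g u)
    (ht : 0 ≤ t) : 0 ≤ lconv f g t := by
  rw [lconv, intervalIntegral.integral_of_le ht, integral_Ioc_eq_integral_Ioo]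
  exact setIntegral_nonneg measurableSet_Ioo fun τ hτ =>
    mul_nonneg (hf _ (sub_pos.2 hτ.2)) (hg _ hτ.1)

lemma intervalIntegrable_lconv_integrand (hf : IntervalIntegrable f volume 0 t)
    (hg : Measurable g) {C : ℝ} (hgC : ∀ u ∈ Ioi (0:ℝ), ‖g u‖ ≤ C) (ht : 0 ≤ t) :
    IntervalIntegrable (fun τ => f (t - τ) * g τ) volume 0 t := by
  have hf' : IntervalIntegrable (fun τ => f (t - τ)) volume 0 t := by
    simpa using (hf.comp_sub_left t).symm
  rw [intervalIntegrable_iff_integrableOn_Ioc_of_le ht] at hf' ⊢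
  exact hf'.mul_bdd hg.aestronglyMeasurable <|
    (ae_restrict_iff' measurableSet_Ioc).2 <| ae_of_all _ fun τ hτ => hgC τ hτ.1

lemma integral_mul_le_lconv_of_antitoneOn (hf : ∀ u ∈ Ioi (0:ℝ), 0 ≤ f u)
    (hg : AntitoneOn g (Ioi 0)) (hfi : IntervalIntegrable f volume 0 t)
    (hfgi : IntervalIntegrable (fun τ => f (t - τ) * g τ) volume 0 t) (ht : 0 < t) :
    (∫ τ in (0:ℝ)..t, f τ) * g t ≤ lconv f g t := by
  have hfi' : IntervalIntegrable (fun τ => f (t - τ)) volume 0 t := by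
    simpa using (hfi.comp_sub_left t).symm
  calc (∫ τ in (0:ℝ)..t, f τ) * g t = ∫ τ in (0:ℝ)..t, f (t - τ) * g t := by
        rw [intervalIntegral.integral_mul_const, intervalIntegral.integral_comp_sub_left]
        simp
    _ ≤ lconv f g t :=
        intervalIntegral.integral_mono_on_of_le_Ioo ht.le (hfi'.mul_const _) hfgi
          fun τ hτ => mul_le_mul_of_nonneg_left (hg hτ.1 ht hτ.2.le) (hf _ (sub_pos.2 hτ.2))

end lconv

theorem stmt_17_general (k l : ℝ → ℝ) (hkl : SoninePC k l) (μ : ℝ) (hμ : 0 < μ)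
    (s : ℝ → ℝ)
    (hs_nonneg : ∀ t ∈ Ioi (0:ℝ), 0 ≤ s t)
    (hs_anti : AntitoneOn s (Ioi 0))
    (hs_meas : Measurable s)
    (hvolt : ∀ t ∈ Ioi (0:ℝ), s t + μ * lconv l s t = 1) :
    ∀ᵐ t : ℝ, (t ∈ Ioi (0:ℝ) ∧ 0 < ∫ τ in (0:ℝ)..t, l τ) →
      μ * s t ≤ (∫ τ in (0:ℝ)..t, l τ)⁻¹ := by
  have hconv_nonneg : ∀ u ∈ Ioi (0:ℝ), 0 ≤ lconv l s u := fun u hu =>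
    lconv_nonneg hkl.l_nonneg hs_nonneg (le_of_lt hu)
  have hs_norm_le : ∀ u ∈ Ioi (0:ℝ), ‖s u‖ ≤ 1 := fun u hu => by
    rw [Real.norm_of_nonneg (hs_nonneg u hu)]
    linarith [hvolt u hu, mul_nonneg hμ.le (hconv_nonneg u hu)]
  refine .of_forall fun t ⟨ht, hL⟩ => ?_
  have hli : IntervalIntegrable l volume 0 t :=
    intervalIntegral.intervalIntegrable_of_integral_ne_zero hL.ne'
  have hconv_ge : (∫ τ in (0:ℝ)..t, l τ) * s t ≤ lconv l s t :=
    integral_mul_le_lconv_of_antitoneOn hkl.l_nonneg hs_anti hli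
      (intervalIntegrable_lconv_integrand hli hs_meas hs_norm_le (le_of_lt ht)) ht
  rw [← one_div, le_div_iff₀ hL]
  linarith [mul_le_mul_of_nonneg_left hconv_ge hμ.le, hvolt t ht, hs_nonneg t ht]

theorem stmt_17 (k l : ℝ → ℝ) (hkl : SoninePC k l) (μ : ℝ) (hμ : 0 < μ)
    (s : ℝ → ℝ)
    (hs_nonneg : ∀ t ∈ Ioi (0:ℝ), 0 ≤ s t)
    (hs_anti : AntitoneOn s (Ioi 0))
    (hs_meas : Measurable s)
    (hs_locInt : LocallyIntegrableOn s (Ioi 0))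
    (hvolt : ∀ t ∈ Ioi (0:ℝ), s t + μ * lconv l s t = 1) :
    ∀ᵐ t : ℝ, (t ∈ Ioi (0:ℝ) ∧ 0 < ∫ τ in (0:ℝ)..t, l τ) →
      μ * s t ≤ (∫ τ in (0:ℝ)..t, l τ)⁻¹ :=
  stmt_17_general k l hkl μ hμ s hs_nonneg hs_anti hs_meas hvolt
end
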